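/- For any positive integer p, the constrained joint spectral radius is bounded by the constrained p-radius on both sides: ρ_p(G,A) ≤ ρ(G,A) ≤ 2^{h(E)/p} · ρ_p(G,A), where h(E) is the entropy of the edge shift of G. -/

import Mathlib

open scoped Classical
open Filter MvPolynomial

/-- The Frobenius norm, a submultiplicative matrix norm. -/
noncomputable def frob {a b : ℕ} (M : Matrix (Fin a) (Fin b) ℝ) : ℝ :=
  Real.sqrt (∑ i, ∑ j, (M i j)^2)

/-- The set `E_k` of paths of length `k` in the labeled graph with edge set `E ⊆ V × V × L`:
sequences of `k` edges of `E` such that the target of each edge is the source of the next. -/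
noncomputable def pathSet {V L : Type*} [Fintype V] [Fintype L]
    (E : Finset (V × V × L)) (k : ℕ) : Finset (Fin k → V × V × L) :=
  Finset.univ.filter (fun s =>
    (∀ i, s i ∈ E) ∧
    ∀ (i : ℕ) (h : i + 1 < k), (s ⟨i, Nat.lt_of_succ_lt h⟩).2.1 = (s ⟨i+1, h⟩).1)

/-- The sequence of labels along a path. -/
def labels {V L : Type*} {k : ℕ} (s : Fin k → V × V × L) : Fin k → L :=
  fun i => (s i).2.2

/-- The product of matrices along a label sequence: `A_s = A_{σ_k} ⋯ A_{σ_1}`. -/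
noncomputable def prodA {n : ℕ} {L : Type*} (A : L → Matrix (Fin n) (Fin n) ℝ)
    {k : ℕ} (σ : Fin k → L) : Matrix (Fin n) (Fin n) ℝ :=
  ((List.ofFn σ).reverse.map A).prod

/-- Maximum of a real-valued function over a (nonempty) finite set. -/
noncomputable def maxOver {α : Type*} (s : Finset α) (f : α → ℝ) : ℝ :=
  sSup (f '' ↑s)

/-- Strong connectivity: every node reaches every node by a path of length ≥ 1. -/
def StronglyConnected {V L : Type*} [Fintype V] [Fintype L]
    (E : Finset (V × V × L)) : Prop :=
  ∀ u v : V, ∃ k : ℕ, ∃ s ∈ pathSet E (k+1), (s 0).1 = u ∧ (s (Fin.last k)).2.1 = v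

/-!
Fix `k ≥ 1`, put `g s = ‖A_s‖^{1/k}` on `E_k` and `q = p k`. The `k`-th term of the `p`-radius
sequence is the power mean of order `q` of `g`, and that of the CJSR sequence is `max g`.
A power mean never exceeds the maximum; conversely `(max g)^q ≤ ∑ g^q = |E_k| · mean`, so
`max g ≤ |E_k|^{1/q} · mean = 2^{log₂|E_k| / (p k)} · mean`. Both bounds pass to the limit.
-/

lemma frob_nonneg {a b : ℕ} (M : Matrix (Fin a) (Fin b) ℝ) : 0 ≤ frob M :=
  Real.sqrt_nonneg _

lemma natCast_rpow_le_two_rpow_logb_mul (N : ℕ) (r : ℝ) :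
    (N : ℝ) ^ r ≤ 2 ^ (Real.logb 2 N * r) := by
  rcases N.eq_zero_or_pos with rfl | hN
  · simpa using Real.zero_rpow_le_one r
  · rw [Real.rpow_mul zero_le_two, Real.rpow_logb zero_lt_two (by norm_num) (by exact_mod_cast hN)]

noncomputable def powerMean {α : Type*} (s : Finset α) (q : ℝ) (g : α → ℝ) : ℝ :=
  ((s.card : ℝ)⁻¹ * ∑ a ∈ s, g a ^ q) ^ (1 / q)

section PowerMean

variable {α : Type*} (s : Finset α) {g : α → ℝ} {q : ℝ}

-- For empty `s` both sides of the bounds below are `0`: `sSup ∅ = 0` and `0⁻¹ = 0` in `ℝ`.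
lemma powerMean_le_sSup (hg : ∀ a, 0 ≤ g a) (hq : 0 < q) :
    powerMean s q g ≤ sSup (g '' s) := by
  rcases s.eq_empty_or_nonempty with rfl | hs
  · simp [powerMean, Real.zero_rpow (inv_pos.2 hq).ne']
  obtain ⟨b, -, hbmax⟩ := s.exists_mem_eq_sup' hs g
  have hcard : (0 : ℝ) < s.card := by exact_mod_cast hs.card_pos
  have hsum : 0 ≤ ∑ a ∈ s, g a ^ q :=
    Finset.sum_nonneg fun a _ => Real.rpow_nonneg (hg a) q
  have hsum_le : ∑ a ∈ s, g a ^ q ≤ s.card * g b ^ q := by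
    simpa using Finset.sum_le_card_nsmul s (g · ^ q) _ fun a ha =>
      Real.rpow_le_rpow (hg a) (hbmax ▸ s.le_sup' g ha) hq.le
  calc powerMean s q g ≤ (g b ^ q) ^ (1 / q) := by
        refine Real.rpow_le_rpow (by positivity) ?_ (by positivity)
        rwa [inv_mul_le_iff₀ hcard]
    _ = sSup (g '' s) := by
        rw [← Real.rpow_mul (hg b), mul_one_div_cancel hq.ne', Real.rpow_one, ← hbmax,
          Finset.sup'_eq_csSup_image]

lemma sSup_le_card_rpow_mul_powerMean (hg : ∀ a, 0 ≤ g a) (hq : 0 < q) :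
    sSup (g '' s) ≤ (s.card : ℝ) ^ (1 / q) * powerMean s q g := by
  rcases s.eq_empty_or_nonempty with rfl | hs
  · simp [powerMean, Real.zero_rpow (inv_pos.2 hq).ne']
  obtain ⟨b, hb, hbmax⟩ := s.exists_mem_eq_sup' hs g
  have hcard : (0 : ℝ) < s.card := by exact_mod_cast hs.card_pos
  have hsum : 0 ≤ ∑ a ∈ s, g a ^ q :=
    Finset.sum_nonneg fun a _ => Real.rpow_nonneg (hg a) q
  calc sSup (g '' s) = (g b ^ q) ^ (1 / q) := by
        rw [← Finset.sup'_eq_csSup_image s hs, hbmax, ← Real.rpow_mul (hg b),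
          mul_one_div_cancel hq.ne', Real.rpow_one]
    _ ≤ (∑ a ∈ s, g a ^ q) ^ (1 / q) :=
        Real.rpow_le_rpow (Real.rpow_nonneg (hg b) q)
          (Finset.single_le_sum (fun a _ => Real.rpow_nonneg (hg a) q) hb) (by positivity)
    _ = (s.card : ℝ) ^ (1 / q) * powerMean s q g := by
        rw [powerMean, ← Real.mul_rpow hcard.le (by positivity), mul_inv_cancel_left₀ hcard.ne']

lemma powerMean_rpow_inv {f : α → ℝ} (hf : ∀ a, 0 ≤ f a) (p : ℝ) {k : ℝ}
    (hk : k ≠ 0) :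
    powerMean s (p * k) (fun a => f a ^ (1 / k)) =
      ((s.card : ℝ)⁻¹ * ∑ a ∈ s, f a ^ p) ^ (1 / (p * k)) := by
  simp only [powerMean, ← Real.rpow_mul (hf _), one_div_mul_eq_div, mul_div_cancel_right₀ p hk]

lemma sSup_le_two_rpow_logb_card_div_mul_powerMean (hg : ∀ a, 0 ≤ g a) (hq : 0 < q) :
    sSup (g '' s) ≤ 2 ^ (Real.logb 2 s.card / q) * powerMean s q g := by
  have hmean : 0 ≤ powerMean s q g := Real.rpow_nonneg (mul_nonneg (by positivity)
    (Finset.sum_nonneg fun a _ => Real.rpow_nonneg (hg a) q)) _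
  calc sSup (g '' s) ≤ (s.card : ℝ) ^ (1 / q) * powerMean s q g :=
        sSup_le_card_rpow_mul_powerMean s hg hq
    _ ≤ 2 ^ (Real.logb 2 s.card / q) * powerMean s q g := by
        gcongr
        simpa only [mul_one_div] using natCast_rpow_le_two_rpow_logb_mul s.card (1 / q)

end PowerMean

theorem p_radius_cjsr_bounds_general {m n : ℕ} (A : Fin m → Matrix (Fin n) (Fin n) ℝ)
    {V : Type*} [Fintype V] (E : Finset (V × V × Fin m))
    (p : ℕ) (hp : 1 ≤ p) (ρ ρp h : ℝ)
    (hρ : Tendsto (fun k : ℕ =>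
        maxOver (pathSet E k) (fun s => frob (prodA A (labels s)) ^ ((1:ℝ)/k)))
      atTop (nhds ρ))
    (hρp : Tendsto (fun k : ℕ =>
        ((((pathSet E k).card : ℝ))⁻¹ *
          ∑ s ∈ pathSet E k, frob (prodA A (labels s)) ^ (p : ℝ)) ^ (1 / ((p : ℝ) * k)))
      atTop (nhds ρp))
    (hh : Tendsto (fun k : ℕ => Real.logb 2 ((pathSet E k).card : ℝ) / k)
      atTop (nhds h)) :
    ρp ≤ ρ ∧ ρ ≤ (2 : ℝ) ^ (h / (p : ℝ)) * ρp := by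
  have hp0 : (0 : ℝ) < p := by exact_mod_cast hp
  have hpk : ∀ᶠ k : ℕ in atTop, (0 : ℝ) < p * k :=
    eventually_atTop.2 ⟨1, fun k hk => mul_pos hp0 (by exact_mod_cast hk)⟩
  have hg : ∀ (k : ℕ) (s : Fin k → V × V × Fin m),
      0 ≤ frob (prodA A (labels s)) ^ ((1 : ℝ) / k) :=
    fun _ _ => Real.rpow_nonneg (frob_nonneg _) _
  have hρp' : Tendsto (fun k : ℕ => powerMean (pathSet E k) (p * k)
      (fun s => frob (prodA A (labels s)) ^ ((1 : ℝ) / k))) atTop (nhds ρp) := by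
    refine hρp.congr' (hpk.mono fun k hk =>
      (powerMean_rpow_inv _ (fun _ => frob_nonneg _) _ ?_).symm)
    exact right_ne_zero_of_mul hk.ne'
  have hentropy : Tendsto (fun k : ℕ => (2 : ℝ) ^ (Real.logb 2 (pathSet E k).card / (p * k)))
      atTop (nhds ((2 : ℝ) ^ (h / p))) := by
    refine ((Real.continuousAt_const_rpow two_ne_zero).tendsto.comp (hh.div_const p)).congr ?_
    intro k
    simp only [Function.comp_apply, div_div, mul_comm (k : ℝ)]
  refine ⟨le_of_tendsto_of_tendsto hρp' hρ (hpk.mono fun k hk => powerMean_le_sSup _ (hg k) hk),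
    le_of_tendsto_of_tendsto hρ (hentropy.mul hρp') (hpk.mono fun k hk => ?_)⟩
  exact sSup_le_two_rpow_logb_card_div_mul_powerMean _ (hg k) hk

/-- for any positive integer `p`, the CJSR is bounded on both sides by the
constrained p-radius: `ρ_p(G,A) ≤ ρ(G,A) ≤ 2^{h(E)/p} · ρ_p(G,A)`. -/
theorem p_radius_cjsr_bounds {m n : ℕ} (A : Fin m → Matrix (Fin n) (Fin n) ℝ)
    {V : Type*} [Fintype V] [Nonempty V] (E : Finset (V × V × Fin m))
    (hSC : StronglyConnected E) (p : ℕ) (hp : 1 ≤ p) (ρ ρp h : ℝ)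
    (hρ : Tendsto (fun k : ℕ =>
        maxOver (pathSet E k) (fun s => frob (prodA A (labels s)) ^ ((1:ℝ)/k)))
      atTop (nhds ρ))
    (hρp : Tendsto (fun k : ℕ =>
        ((((pathSet E k).card : ℝ))⁻¹ *
          ∑ s ∈ pathSet E k, frob (prodA A (labels s)) ^ (p : ℝ)) ^ (1 / ((p : ℝ) * k)))
      atTop (nhds ρp))
    (hh : Tendsto (fun k : ℕ => Real.logb 2 ((pathSet E k).card : ℝ) / k)
      atTop (nhds h)) :
    ρp ≤ ρ ∧ ρ ≤ (2 : ℝ) ^ (h / (p : ℝ)) * ρp :=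
  p_radius_cjsr_bounds_general A E p hp ρ ρp h hρ hρp hh
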